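/- Let X be a compact subset of ℝ^N, let S¹ ⊂ ℝ² be the unit circle, and equip the compact space X × S¹ ⊂ ℝ^{N+2} with a finite positive Borel measure μ. Consider the test functions on X × S¹ of the form (x, s) ↦ u(x)·v(s) with u ∈ {1, pr_1, …, pr_N, −pr_1, …, −pr_N, Σ_{k=1}^N pr_k²} (restricted to X) and v ∈ {1, cos, −cos, sin, −sin} (the restrictions of 1, ±pr_1, ±pr_2 on ℝ² to S¹). Let (T_n) be a sequence of weakly nonlinear (sublinear and translatable) and monotone operators from C(X × S¹) into itself such that for each such test function h and every ε > 0 one has μ({z ∈ X × S¹ : |T_n(h)(z) − h(z)| ≥ ε}) → 0 as n → ∞. Then for every f ∈ C(X × S¹) and every ε > 0, μ({z ∈ X × S¹ : |T_n(f)(z) − f(z)| ≥ ε}) → 0 as n → ∞. -/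

import Mathlib

open MeasureTheory Filter Topology Set

/-!
By uniform continuity, `|f z - f w| ≤ ε + K * dist z w ^ 2`, and on `X × S¹` the squared
distance is dominated by `∑ i, (φ i z - φ i w) ^ 2`, where the `φ i` are the coordinate
functions `pr_k`, `cos`, `sin`. Expanding the square writes this gauge as a combination of the
test functions `1`, `∑ φ i ^ 2 = ∑ pr_k ^ 2 + 1`, `±φ i`, with coefficients bounded uniformly in
`w` and value `0` at `z = w`. Monotonicity, sublinearity and translatability of `T` then bound
`|T f w - f w|` by `ε` plus a constant times the sum of the test errors `|T h w - h w|` at the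
same point `w`. Hence the set where `T n f` is far from `f` lies in a finite union of sets where
some test error is large, and the measures of these tend to `0`.
-/

/-- The unit circle `S¹ = {(cos θ, sin θ) : θ ∈ [0, 2π)} ⊆ ℝ²`. -/
def unitCircle : Set (ℝ × ℝ) := {p | p.1 ^ 2 + p.2 ^ 2 = 1}

structure IsWeaklyNonlinearMonotone {Z : Type*} [TopologicalSpace Z]
    (T : C(Z, ℝ) → C(Z, ℝ)) : Prop where
  map_add_le : ∀ f g, T (f + g) ≤ T f + T g
  map_smul_of_nonneg : ∀ α : ℝ, 0 ≤ α → ∀ f, T (α • f) = α • T f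
  monotone : Monotone T
  map_add_smul_one_of_nonneg : ∀ f, ∀ α : ℝ, 0 ≤ α → T (f + α • 1) = T f + α • T 1

section Tests

variable {Z : Type*} [TopologicalSpace Z] {ι : Type*} [Fintype ι]

def korovkinTests (φ : ι → C(Z, ℝ)) : Fin 2 ⊕ (ι ⊕ ι) → C(Z, ℝ) :=
  Sum.elim ![1, ∑ i, φ i ^ 2] (Sum.elim φ (-φ))

lemma sum_dist_korovkinTests (T : C(Z, ℝ) → C(Z, ℝ)) (φ : ι → C(Z, ℝ)) (w : Z) :
    ∑ j, dist (T (korovkinTests φ j) w) (korovkinTests φ j w) =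
      dist (T 1 w) 1 + dist (T (∑ i, φ i ^ 2) w) ((∑ i, φ i ^ 2) w) +
        ∑ i, (dist (T (φ i) w) (φ i w) + dist (T (-φ i) w) ((-φ i) w)) := by
  simp [korovkinTests, Fintype.sum_sum_type, Finset.sum_add_distrib, add_assoc]

def korovkinGauge (φ : ι → C(Z, ℝ)) (w : Z) : C(Z, ℝ) :=
  ∑ i, φ i ^ 2 + ∑ i, (-2 * φ i w) • φ i + (∑ i, φ i w ^ 2) • 1

lemma korovkinGauge_apply (φ : ι → C(Z, ℝ)) (w z : Z) :
    korovkinGauge φ w z = ∑ i, (φ i z - φ i w) ^ 2 := by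
  simp only [korovkinGauge, ContinuousMap.add_apply, ContinuousMap.sum_apply,
    ContinuousMap.smul_apply, ContinuousMap.pow_apply, ContinuousMap.one_apply, smul_eq_mul, mul_one,
    ← Finset.sum_add_distrib]
  exact Finset.sum_congr rfl fun i _ => by ring

end Tests

namespace IsWeaklyNonlinearMonotone

variable {Z : Type*} [TopologicalSpace Z] {T : C(Z, ℝ) → C(Z, ℝ)}
  (hT : IsWeaklyNonlinearMonotone T)
include hT

lemma map_zero : T 0 = 0 := by
  simpa using hT.map_smul_of_nonneg 0 le_rfl 0

lemma map_sum_le {ι : Type*} (s : Finset ι) (g : ι → C(Z, ℝ)) :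
    T (∑ i ∈ s, g i) ≤ ∑ i ∈ s, T (g i) := by
  classical
  induction s using Finset.cons_induction with
  | empty => simp [hT.map_zero]
  | cons a s ha ih =>
    rw [Finset.sum_cons, Finset.sum_cons]
    exact (hT.map_add_le _ _).trans (add_le_add_right ih _)

lemma map_add_smul_one (f : C(Z, ℝ)) (α : ℝ) : T (f + α • 1) = T f + α • T 1 := by
  rcases le_or_gt 0 α with hα | hα
  · exact hT.map_add_smul_one_of_nonneg f α hα
  · have h := hT.map_add_smul_one_of_nonneg (f + α • 1) (-α) (by linarith)
    rw [add_assoc, ← add_smul, add_neg_cancel, zero_smul, add_zero] at h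
    rw [h, neg_smul, neg_add_cancel_right]

lemma apply_smul_le (c : ℝ) (g : C(Z, ℝ)) (w : Z) :
    T (c • g) w ≤ c * g w + |c| * (dist (T g w) (g w) + dist (T (-g) w) ((-g) w)) := by
  rw [Real.dist_eq, Real.dist_eq]
  rcases le_or_gt 0 c with hc | hc
  · rw [hT.map_smul_of_nonneg c hc, ContinuousMap.smul_apply, smul_eq_mul, abs_of_nonneg hc]
    nlinarith [le_abs_self (T g w - g w), abs_nonneg (T (-g) w - (-g) w)]
  · rw [← neg_smul_neg, hT.map_smul_of_nonneg (-c) (by linarith), ContinuousMap.smul_apply,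
      smul_eq_mul, abs_of_neg hc, ContinuousMap.neg_apply]
    nlinarith [le_abs_self (T (-g) w - -g w), abs_nonneg (T g w - g w)]

lemma abs_apply_sub_mul_apply_one_le {f h : C(Z, ℝ)} {w : Z}
    (hfh : ∀ z, |f z - f w| ≤ h z) : |T f w - f w * T 1 w| ≤ T h w := by
  have hup : f ≤ h + f w • 1 := ContinuousMap.le_def.mpr fun z => by
    simp only [ContinuousMap.add_apply, ContinuousMap.smul_apply, ContinuousMap.one_apply,
      smul_eq_mul, mul_one]
    linarith [(abs_le.mp (hfh z)).2]
  have hlow : f w • 1 ≤ f + h := ContinuousMap.le_def.mpr fun z => by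
    simp only [ContinuousMap.add_apply, ContinuousMap.smul_apply, ContinuousMap.one_apply,
      smul_eq_mul, mul_one]
    linarith [(abs_le.mp (hfh z)).1]
  have hTup := ContinuousMap.le_def.mp (hT.monotone hup) w
  have hTlow := ContinuousMap.le_def.mp ((hT.monotone hlow).trans (hT.map_add_le f h)) w
  rw [hT.map_add_smul_one] at hTup
  rw [← zero_add (f w • 1), hT.map_add_smul_one, hT.map_zero] at hTlow
  simp only [ContinuousMap.add_apply, ContinuousMap.smul_apply,
    smul_eq_mul, zero_add] at hTup hTlow
  exact abs_le.mpr ⟨by linarith, by linarith⟩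

lemma apply_add_sum_smul_add_smul_one_le {ι : Type*} [Fintype ι] (q : C(Z, ℝ))
    (φ : ι → C(Z, ℝ)) (c : ι → ℝ) (a : ℝ) (w : Z) :
    T (q + ∑ i, c i • φ i + a • 1) w ≤ (q + ∑ i, c i • φ i + a • 1) w + dist (T q w) (q w) +
      |a| * dist (T 1 w) 1 +
        ∑ i, |c i| * (dist (T (φ i) w) (φ i w) + dist (T (-φ i) w) ((-φ i) w)) := by
  have hsum := ContinuousMap.le_def.mp ((hT.map_add_le q _).trans
    (add_le_add_right (hT.map_sum_le Finset.univ fun i => c i • φ i) _)) w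
  have hsmul := Finset.sum_le_sum fun i (_ : i ∈ Finset.univ) => hT.apply_smul_le (c i) (φ i) w
  have hq : T q w ≤ q w + dist (T q w) (q w) := by
    rw [Real.dist_eq]; linarith [le_abs_self (T q w - q w)]
  have hone : a * T 1 w ≤ a + |a| * dist (T 1 w) 1 := by
    rw [Real.dist_eq, ← abs_mul]; linarith [le_abs_self (a * (T 1 w - 1))]
  rw [hT.map_add_smul_one]
  simp only [ContinuousMap.add_apply, ContinuousMap.sum_apply, ContinuousMap.smul_apply,
    ContinuousMap.one_apply, smul_eq_mul, mul_one] at hsum ⊢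
  rw [Finset.sum_add_distrib] at hsmul
  linarith

lemma apply_korovkinGauge_self_le {ι : Type*} [Fintype ι] (φ : ι → C(Z, ℝ)) (w : Z) {R : ℝ}
    (hR0 : 0 ≤ R) (hR : ∀ i z, |φ i z| ≤ R) :
    T (korovkinGauge φ w) w ≤ (1 + Fintype.card ι * R ^ 2 + 2 * R) *
      ∑ j, dist (T (korovkinTests φ j) w) (korovkinTests φ j w) := by
  set B := 1 + Fintype.card ι * R ^ 2 + 2 * R
  set a := ∑ i, φ i w ^ 2
  have ha : |a| ≤ B := by
    have : a ≤ Fintype.card ι * R ^ 2 := by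
      simpa using Finset.sum_le_card_nsmul Finset.univ (fun i => φ i w ^ 2) (R ^ 2)
        fun i _ => sq_le_sq' (abs_le.mp (hR i w)).1 (abs_le.mp (hR i w)).2
    rw [abs_of_nonneg (by positivity)]
    linarith [sq_nonneg R]
  have hc : ∀ i, |-2 * φ i w| ≤ B := fun i => by
    rw [abs_mul, abs_neg, abs_two]
    nlinarith [hR i w, sq_nonneg R, Nat.cast_nonneg (α := ℝ) (Fintype.card ι)]
  have h := hT.apply_add_sum_smul_add_smul_one_le (∑ i, φ i ^ 2) φ (fun i => -2 * φ i w) a w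
  rw [← korovkinGauge, korovkinGauge_apply] at h
  simp only [sub_self, ne_eq, OfNat.ofNat_ne_zero, not_false_eq_true, zero_pow,
    Finset.sum_const_zero, zero_add] at h
  have hB : 1 ≤ B := by simp only [B]; nlinarith [Nat.cast_nonneg (α := ℝ) (Fintype.card ι)]
  refine h.trans ?_
  rw [sum_dist_korovkinTests, mul_add, mul_add, Finset.mul_sum, add_comm (B * _)]
  gcongr with i
  · exact le_mul_of_one_le_left dist_nonneg hB
  · exact hc i

end IsWeaklyNonlinearMonotone

lemma ContinuousMap.exists_abs_sub_le_add_mul_dist_sq {Z : Type*} [PseudoMetricSpace Z]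
    [CompactSpace Z] (f : C(Z, ℝ)) {ε : ℝ} (hε : 0 < ε) :
    ∃ K, 0 ≤ K ∧ ∀ z w, |f z - f w| ≤ ε + K * dist z w ^ 2 := by
  obtain ⟨δ, hδ, hfδ⟩ := Metric.uniformContinuous_iff.mp
    (CompactSpace.uniformContinuous_of_continuous f.continuous) ε hε
  refine ⟨2 * ‖f‖ / δ ^ 2, by positivity, fun z w => ?_⟩
  have hK : 0 ≤ 2 * ‖f‖ / δ ^ 2 * dist z w ^ 2 := by positivity
  rcases lt_or_ge (dist z w) δ with hzw | hzw
  · have := hfδ hzw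
    rw [Real.dist_eq] at this
    linarith
  · have hf2 : |f z - f w| ≤ 2 * ‖f‖ := by
      have := abs_sub (f z) (f w)
      linarith [f.norm_coe_le_norm z, f.norm_coe_le_norm w, Real.norm_eq_abs (f z),
        Real.norm_eq_abs (f w)]
    have : 2 * ‖f‖ ≤ 2 * ‖f‖ / δ ^ 2 * dist z w ^ 2 := by
      rw [div_mul_eq_mul_div, le_div_iff₀ (by positivity)]
      gcongr
    linarith

theorem MeasureTheory.tendstoInMeasure_of_dist_le_add_mul_sum {α ν κ E F : Type*}
    [MeasurableSpace α] {μ : Measure α} [PseudoMetricSpace E] [PseudoMetricSpace F] [Fintype κ]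
    {l : Filter ν} {f : ν → α → E} {g : α → E} {G : κ → ν → α → F} {H : κ → α → F}
    (hG : ∀ j, TendstoInMeasure μ (G j) l (H j))
    (hf : ∀ ε > 0, ∃ C, ∀ n x, dist (f n x) (g x) ≤ ε + C * ∑ j, dist (G j n x) (H j x)) :
    TendstoInMeasure μ f l g := by
  simp only [tendstoInMeasure_iff_dist] at hG ⊢
  intro δ hδ
  obtain ⟨C, hC⟩ := hf (δ / 2) (half_pos hδ)
  obtain ⟨η, hη, hηC⟩ := exists_pos_mul_lt (half_pos hδ) (|C| * Fintype.card κ)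
  have hsub : ∀ n, {x | δ ≤ dist (f n x) (g x)} ⊆ ⋃ j, {x | η ≤ dist (G j n x) (H j x)} := by
    intro n x hx
    by_contra hx'
    simp only [mem_iUnion, mem_ofPred_eq, not_exists, not_le] at hx hx'
    have hsum : ∑ j, dist (G j n x) (H j x) ≤ Fintype.card κ * η := by
      simpa using Finset.sum_le_card_nsmul Finset.univ _ η fun j _ => (hx' j).le
    have hCsum : C * ∑ j, dist (G j n x) (H j x) ≤ |C| * (Fintype.card κ * η) :=
      (mul_le_mul_of_nonneg_right (le_abs_self C) (Finset.sum_nonneg fun j _ => dist_nonneg)).trans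
        (mul_le_mul_of_nonneg_left hsum (abs_nonneg C))
    linarith [hC n x]
  have hlim : Tendsto (fun n => ∑ j, μ {x | η ≤ dist (G j n x) (H j x)}) l (𝓝 0) := by
    simpa using tendsto_finsetSum Finset.univ fun j _ => hG j η hη
  exact tendsto_of_tendsto_of_tendsto_of_le_of_le tendsto_const_nhds hlim (fun _ => zero_le)
    fun n => (measure_mono (hsub n)).trans (measure_iUnion_fintype_le μ _)

namespace IsWeaklyNonlinearMonotone

variable {Z : Type*} [PseudoMetricSpace Z] [CompactSpace Z] {ι : Type*} [Fintype ι]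

lemma dist_apply_le_add_mul_sum_dist {T : C(Z, ℝ) → C(Z, ℝ)} (hT : IsWeaklyNonlinearMonotone T)
    {φ : ι → C(Z, ℝ)} (hφ : ∀ z w, dist z w ^ 2 ≤ ∑ i, (φ i z - φ i w) ^ 2)
    {f : C(Z, ℝ)} {ε K R : ℝ} (hε : 0 ≤ ε) (hK : 0 ≤ K)
    (hf : ∀ z w, |f z - f w| ≤ ε + K * dist z w ^ 2) (hR0 : 0 ≤ R) (hR : ∀ i z, |φ i z| ≤ R)
    (w : Z) :
    dist (T f w) (f w) ≤ ε + (ε + K * (1 + Fintype.card ι * R ^ 2 + 2 * R) + ‖f‖) *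
      ∑ j, dist (T (korovkinTests φ j) w) (korovkinTests φ j w) := by
  set E := ∑ j, dist (T (korovkinTests φ j) w) (korovkinTests φ j w) with hE
  set h := K • korovkinGauge φ w + ε • 1
  have hfh : ∀ z, |f z - f w| ≤ h z := fun z => by
    simp only [h, ContinuousMap.add_apply, ContinuousMap.smul_apply, ContinuousMap.one_apply,
      korovkinGauge_apply, smul_eq_mul, mul_one]
    linarith [hf z w, mul_le_mul_of_nonneg_left (hφ z w) hK]
  have hTh : T h w = K * T (korovkinGauge φ w) w + ε * T 1 w := by
    simp only [h, hT.map_add_smul_one, hT.map_smul_of_nonneg K hK, ContinuousMap.add_apply,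
      ContinuousMap.smul_apply, smul_eq_mul]
  have hd1 : dist (T 1 w) 1 ≤ E := by
    rw [hE, sum_dist_korovkinTests, add_assoc]
    exact le_add_of_nonneg_right (add_nonneg dist_nonneg
      (Finset.sum_nonneg fun i _ => add_nonneg dist_nonneg dist_nonneg))
  have hT1 : T 1 w ≤ 1 + E := by
    linarith [le_abs_self (T 1 w - 1), Real.dist_eq (T 1 w) 1]
  calc dist (T f w) (f w) ≤ |T f w - f w * T 1 w| + |f w| * dist (T 1 w) 1 := by
        rw [Real.dist_eq, Real.dist_eq, ← abs_mul,
          show T f w - f w = (T f w - f w * T 1 w) + f w * (T 1 w - 1) by ring]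
        exact abs_add_le _ _
    _ ≤ (K * T (korovkinGauge φ w) w + ε * T 1 w) + ‖f‖ * dist (T 1 w) 1 := by
        rw [← hTh]
        gcongr
        · exact hT.abs_apply_sub_mul_apply_one_le hfh
        · exact f.norm_coe_le_norm w
    _ ≤ K * ((1 + Fintype.card ι * R ^ 2 + 2 * R) * E) + ε * (1 + E) + ‖f‖ * E := by
        gcongr
        exact hT.apply_korovkinGauge_self_le φ w hR0 hR
    _ = ε + (ε + K * (1 + Fintype.card ι * R ^ 2 + 2 * R) + ‖f‖) * E := by ring

theorem tendstoInMeasure_of_korovkinTests [MeasurableSpace Z] {μ : Measure Z} {ν : Type*}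
    {l : Filter ν} {T : ν → C(Z, ℝ) → C(Z, ℝ)} (hT : ∀ n, IsWeaklyNonlinearMonotone (T n))
    {φ : ι → C(Z, ℝ)} (hφ : ∀ z w, dist z w ^ 2 ≤ ∑ i, (φ i z - φ i w) ^ 2)
    (htests : ∀ j, TendstoInMeasure μ (fun n => ⇑(T n (korovkinTests φ j))) l (korovkinTests φ j))
    (f : C(Z, ℝ)) : TendstoInMeasure μ (fun n => ⇑(T n f)) l f := by
  refine tendstoInMeasure_of_dist_le_add_mul_sum htests fun ε hε => ?_
  obtain ⟨K, hK, hf⟩ := f.exists_abs_sub_le_add_mul_dist_sq hε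
  have hR : ∀ i z, |φ i z| ≤ ∑ i, ‖φ i‖ := fun i z =>
    (φ i).norm_coe_le_norm z |>.trans
      (Finset.single_le_sum (fun i _ => norm_nonneg (φ i)) (Finset.mem_univ i))
  exact ⟨_, fun n w => (hT n).dist_apply_le_add_mul_sum_dist hφ hε.le hK hf
    (Finset.sum_nonneg fun i _ => norm_nonneg _) hR w⟩

end IsWeaklyNonlinearMonotone

lemma IsWeaklyNonlinearMonotone.tendstoInMeasure_add_one {Z : Type*} [TopologicalSpace Z]
    [MeasurableSpace Z] {μ : Measure Z} {ν : Type*} {l : Filter ν} {T : ν → C(Z, ℝ) → C(Z, ℝ)}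
    (hT : ∀ n, IsWeaklyNonlinearMonotone (T n)) {g : C(Z, ℝ)}
    (hg : TendstoInMeasure μ (fun n => ⇑(T n g)) l g)
    (h1 : TendstoInMeasure μ (fun n => ⇑(T n 1)) l 1) :
    TendstoInMeasure μ (fun n => ⇑(T n (g + 1))) l ⇑(g + 1) := by
  refine tendstoInMeasure_of_dist_le_add_mul_sum (G := ![fun n => ⇑(T n g), fun n => ⇑(T n 1)])
    (H := ![⇑g, 1]) (fun j => by fin_cases j <;> assumption) fun ε hε => ⟨1, fun n z => ?_⟩
  have hadd : T n (g + 1) = T n g + T n 1 := by simpa using (hT n).map_add_smul_one g 1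
  simp only [Fin.sum_univ_two, Matrix.cons_val_zero, Matrix.cons_val_one, hadd,
    ContinuousMap.add_apply, ContinuousMap.one_apply, Pi.one_apply, one_mul]
  linarith [dist_add_add_le (T n g z) (T n 1 z) (g z) 1]

lemma isCompact_unitCircle : IsCompact unitCircle := by
  refine Metric.isCompact_of_isClosed_isBounded (isClosed_eq (by fun_prop) continuous_const)
    ((Metric.isBounded_closedBall (x := 0) (r := 1)).subset ?_)
  intro p (hp : p.1 ^ 2 + p.2 ^ 2 = 1)
  simp only [Metric.mem_closedBall, dist_zero_right, Prod.norm_def, Real.norm_eq_abs, max_le_iff,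
    ← sq_le_one_iff_abs_le_one]
  constructor <;> nlinarith

def prodCircleCoord {N : ℕ} (X : Set (Fin N → ℝ)) : Fin N ⊕ Fin 2 → C(X × unitCircle, ℝ) :=
  Sum.elim
    (fun k => ⟨fun z => (z.1 : Fin N → ℝ) k,
      (continuous_apply k).comp (continuous_subtype_val.comp continuous_fst)⟩)
    ![⟨fun z => (z.2 : ℝ × ℝ).1, by fun_prop⟩, ⟨fun z => (z.2 : ℝ × ℝ).2, by fun_prop⟩]

lemma dist_sq_le_sum_sq_prodCircleCoord {N : ℕ} (X : Set (Fin N → ℝ)) (z w : X × unitCircle) :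
    dist z w ^ 2 ≤ ∑ i, (prodCircleCoord X i z - prodCircleCoord X i w) ^ 2 := by
  set d := fun i => prodCircleCoord X i z - prodCircleCoord X i w
  set S := ∑ i, d i ^ 2
  have hS : ∀ i, |d i| ≤ √S := fun i =>
    Real.abs_le_sqrt (Finset.single_le_sum (f := fun i => d i ^ 2) (fun i _ => sq_nonneg _)
      (Finset.mem_univ i))
  have hdist : dist z w ≤ √S := by
    rw [Prod.dist_eq, Subtype.dist_eq, Subtype.dist_eq, Prod.dist_eq]
    refine max_le ((dist_pi_le_iff (Real.sqrt_nonneg _)).mpr fun k => ?_) (max_le ?_ ?_)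
    · simpa [d, prodCircleCoord, Real.dist_eq] using hS (.inl k)
    · simpa [d, prodCircleCoord, Real.dist_eq] using hS (.inr 0)
    · simpa [d, prodCircleCoord, Real.dist_eq] using hS (.inr 1)
  calc dist z w ^ 2 ≤ √S ^ 2 := pow_le_pow_left₀ dist_nonneg hdist 2
    _ = S := Real.sq_sqrt (Finset.sum_nonneg fun i _ => sq_nonneg _)

lemma sum_sq_prodCircleCoord {N : ℕ} (X : Set (Fin N → ℝ)) :
    ∑ i, prodCircleCoord X i ^ 2 = ∑ k, prodCircleCoord X (.inl k) ^ 2 + 1 := by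
  ext z
  have hz : (z.2 : ℝ × ℝ).1 ^ 2 + (z.2 : ℝ × ℝ).2 ^ 2 = 1 := z.2.2
  simp [Fintype.sum_sum_type, prodCircleCoord, Fin.sum_univ_two, hz]

theorem korovkin_product_circle_inMeasure_general {N : ℕ} (X : Set (Fin N → ℝ))
    (hX : IsCompact X)
    (μ : Measure (X × unitCircle))
    (T : ℕ → C(X × unitCircle, ℝ) → C(X × unitCircle, ℝ))
    (hsubadd : ∀ n, ∀ f g : C(X × unitCircle, ℝ), T n (f + g) ≤ T n f + T n g)
    (hhom : ∀ n, ∀ (α : ℝ), 0 ≤ α → ∀ f : C(X × unitCircle, ℝ),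
      T n (α • f) = α • T n f)
    (hmono : ∀ n, ∀ f g : C(X × unitCircle, ℝ), f ≤ g → T n f ≤ T n g)
    (htrans : ∀ n, ∀ f : C(X × unitCircle, ℝ), ∀ (α : ℝ), 0 ≤ α →
      T n (f + α • (1 : C(X × unitCircle, ℝ)))
        = T n f + α • T n (1 : C(X × unitCircle, ℝ)))
    -- convergence in measure on the test functions `(x, s) ↦ u x * v s`
    (htest : ∀ h : C(X × unitCircle, ℝ),
      (∃ u : X → ℝ,
        ((u = fun _ => (1 : ℝ)) ∨ (∃ k : Fin N, u = fun x : X => (x : Fin N → ℝ) k) ∨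
          (∃ k : Fin N, u = fun x : X => -((x : Fin N → ℝ) k)) ∨
          (u = fun x : X => ∑ k, ((x : Fin N → ℝ) k) ^ 2)) ∧
        ∃ v : unitCircle → ℝ,
          ((v = fun _ => (1 : ℝ)) ∨ (v = fun s : unitCircle => (s : ℝ × ℝ).1) ∨
            (v = fun s : unitCircle => -(s : ℝ × ℝ).1) ∨ (v = fun s : unitCircle => (s : ℝ × ℝ).2) ∨
            (v = fun s : unitCircle => -(s : ℝ × ℝ).2)) ∧
          ∀ z : X × unitCircle, h z = u z.1 * v z.2) →
      ∀ ε : ℝ, 0 < ε →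
        Tendsto (fun n => μ {z | ε ≤ |T n h z - h z|}) atTop (𝓝 0))
    (f : C(X × unitCircle, ℝ)) :
    ∀ ε : ℝ, 0 < ε →
      Tendsto (fun n => μ {z | ε ≤ |T n f z - f z|}) atTop (𝓝 0) := by
  have : CompactSpace X := isCompact_iff_compactSpace.mp hX
  have : CompactSpace unitCircle := isCompact_iff_compactSpace.mp isCompact_unitCircle
  have hT n : IsWeaklyNonlinearMonotone (T n) :=
    ⟨hsubadd n, hhom n, fun f g => hmono n f g, htrans n⟩
  have test : ∀ h, _ → TendstoInMeasure μ (fun n => ⇑(T n h)) atTop h := fun h hh =>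
    tendstoInMeasure_iff_dist.mpr (by simpa only [Real.dist_eq] using htest h hh)
  suffices htests : ∀ j, TendstoInMeasure μ (fun n => ⇑(T n (korovkinTests (prodCircleCoord X) j)))
      atTop (korovkinTests (prodCircleCoord X) j) by
    simpa only [tendstoInMeasure_iff_dist, Real.dist_eq] using
      IsWeaklyNonlinearMonotone.tendstoInMeasure_of_korovkinTests hT
        (dist_sq_le_sum_sq_prodCircleCoord X) htests f
  have h1 := test 1 ⟨_, Or.inl rfl, _, Or.inl rfl, fun z => by simp⟩
  rintro (j | (k | j) | (k | j))
  · fin_cases j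
    · exact h1
    · show TendstoInMeasure μ (fun n => ⇑(T n (∑ i, prodCircleCoord X i ^ 2))) atTop
        ⇑(∑ i, prodCircleCoord X i ^ 2)
      rw [sum_sq_prodCircleCoord]
      exact IsWeaklyNonlinearMonotone.tendstoInMeasure_add_one hT
        (test _ ⟨_, Or.inr (Or.inr (Or.inr rfl)), _, Or.inl rfl,
          fun z => by simp [prodCircleCoord]⟩) h1
  · exact test _ ⟨_, Or.inr (Or.inl ⟨k, rfl⟩), _, Or.inl rfl,
      fun z => by simp [korovkinTests, prodCircleCoord]⟩
  · fin_cases j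
    · exact test _ ⟨_, Or.inl rfl, _, Or.inr (Or.inl rfl),
        fun z => by simp [korovkinTests, prodCircleCoord]⟩
    · exact test _ ⟨_, Or.inl rfl, _, Or.inr (Or.inr (Or.inr (Or.inl rfl))),
        fun z => by simp [korovkinTests, prodCircleCoord]⟩
  · exact test _ ⟨_, Or.inr (Or.inr (Or.inl ⟨k, rfl⟩)), _, Or.inl rfl,
      fun z => by simp [korovkinTests, prodCircleCoord]⟩
  · fin_cases j
    · exact test _ ⟨_, Or.inl rfl, _, Or.inr (Or.inr (Or.inl rfl)),
        fun z => by simp [korovkinTests, prodCircleCoord]⟩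
    · exact test _ ⟨_, Or.inl rfl, _, Or.inr (Or.inr (Or.inr (Or.inr rfl))),
        fun z => by simp [korovkinTests, prodCircleCoord]⟩

/-- **Remark `exPopa`, convergence in measure.** Korovkin-type theorem
on `X × S¹` (`X` a compact subset of `ℝ^N`), with a finite Borel measure `μ`, for
weakly nonlinear and monotone operators on `C(X × S¹)` and the test functions
`(x, s) ↦ u(x) v(s)` with `u ∈ {1, ±pr_1, …, ±pr_N, Σ pr_k²}` and
`v ∈ {1, ±cos, ±sin}`: convergence in `μ`-measure on the test functions implies
convergence in `μ`-measure for every `f ∈ C(X × S¹)`. -/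
theorem korovkin_product_circle_inMeasure {N : ℕ} (X : Set (Fin N → ℝ))
    (hX : IsCompact X)
    (μ : Measure (X × unitCircle)) [IsFiniteMeasure μ]
    (T : ℕ → C(X × unitCircle, ℝ) → C(X × unitCircle, ℝ))
    (hsubadd : ∀ n, ∀ f g : C(X × unitCircle, ℝ), T n (f + g) ≤ T n f + T n g)
    (hhom : ∀ n, ∀ (α : ℝ), 0 ≤ α → ∀ f : C(X × unitCircle, ℝ),
      T n (α • f) = α • T n f)
    (hmono : ∀ n, ∀ f g : C(X × unitCircle, ℝ), f ≤ g → T n f ≤ T n g)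
    (htrans : ∀ n, ∀ f : C(X × unitCircle, ℝ), ∀ (α : ℝ), 0 ≤ α →
      T n (f + α • (1 : C(X × unitCircle, ℝ)))
        = T n f + α • T n (1 : C(X × unitCircle, ℝ)))
    -- convergence in measure on the test functions `(x, s) ↦ u x * v s`
    (htest : ∀ h : C(X × unitCircle, ℝ),
      (∃ u : X → ℝ,
        ((u = fun _ => (1 : ℝ)) ∨ (∃ k : Fin N, u = fun x : X => (x : Fin N → ℝ) k) ∨
          (∃ k : Fin N, u = fun x : X => -((x : Fin N → ℝ) k)) ∨
          (u = fun x : X => ∑ k, ((x : Fin N → ℝ) k) ^ 2)) ∧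
        ∃ v : unitCircle → ℝ,
          ((v = fun _ => (1 : ℝ)) ∨ (v = fun s : unitCircle => (s : ℝ × ℝ).1) ∨
            (v = fun s : unitCircle => -(s : ℝ × ℝ).1) ∨ (v = fun s : unitCircle => (s : ℝ × ℝ).2) ∨
            (v = fun s : unitCircle => -(s : ℝ × ℝ).2)) ∧
          ∀ z : X × unitCircle, h z = u z.1 * v z.2) →
      ∀ ε : ℝ, 0 < ε →
        Tendsto (fun n => μ {z | ε ≤ |T n h z - h z|}) atTop (𝓝 0))
    (f : C(X × unitCircle, ℝ)) :
    ∀ ε : ℝ, 0 < ε →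
      Tendsto (fun n => μ {z | ε ≤ |T n f z - f z|}) atTop (𝓝 0) :=
  korovkin_product_circle_inMeasure_general X hX μ T hsubadd hhom hmono htrans htest f
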